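/- For α ∈ k with α ≠ 1, the first syzygy of the right Λ(q)-module M(α) is isomorphic to M(qα), i.e. the kernel of the projective cover Λ(q) → M(α) (sending 1 to v) is isomorphic to M(qα). -/

import Mathlib

open FreeAlgebra MulOpposite CategoryTheory

universe u

/-- The defining relations of Ringel–Zhang's algebra `Λ(q)`.
Generators: `0 ↦ x`, `1 ↦ y`, `2 ↦ z`. -/
inductive LambdaRel (k : Type u) [Field k] (q : k) :
    FreeAlgebra k (Fin 3) → FreeAlgebra k (Fin 3) → Prop
  | xx : LambdaRel k q (ι k 0 * ι k 0) 0
  | yy : LambdaRel k q (ι k 1 * ι k 1) 0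
  | zz : LambdaRel k q (ι k 2 * ι k 2) 0
  | zy : LambdaRel k q (ι k 2 * ι k 1) 0
  | yx : LambdaRel k q (ι k 1 * ι k 0 + q • (ι k 0 * ι k 1)) 0
  | zx : LambdaRel k q (ι k 2 * ι k 0 - ι k 0 * ι k 2) 0
  | yz : LambdaRel k q (ι k 1 * ι k 2 - ι k 0 * ι k 2) 0

/-- The algebra `Λ(q) = k⟨x,y,z⟩/(x², y², z², zy, yx+qxy, zx−xz, yz−xz)`. -/
abbrev Lambda (k : Type u) [Field k] (q : k) : Type u := RingQuot (LambdaRel k q)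

variable (k : Type u) [Field k] (q : k)

/-- The image of `x` in `Λ(q)`. -/
noncomputable def Lx : Lambda k q := RingQuot.mkAlgHom k (LambdaRel k q) (ι k 0)
/-- The image of `y` in `Λ(q)`. -/
noncomputable def Ly : Lambda k q := RingQuot.mkAlgHom k (LambdaRel k q) (ι k 1)
/-- The image of `z` in `Λ(q)`. -/
noncomputable def Lz : Lambda k q := RingQuot.mkAlgHom k (LambdaRel k q) (ι k 2)

/-- The data of a right `Λ(q)`-module (a left module over `(Λ(q))ᵐᵒᵖ`) realizing
Ringel–Zhang's module `M(α)`: a `k`-basis `v, v′, v″` (`basis 0, basis 1, basis 2`) with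
`v·x = α v′`, `v·y = v′`, `v·z = v″`, and `v′, v″` annihilated by `x`, `y`, `z`. -/
structure MAlpha (α : k) where
  carrier : Type u
  [acg : AddCommGroup carrier]
  [modk : Module k carrier]
  [modL : Module (Lambda k q)ᵐᵒᵖ carrier]
  [tower : IsScalarTower k (Lambda k q)ᵐᵒᵖ carrier]
  [comm : SMulCommClass k (Lambda k q)ᵐᵒᵖ carrier]
  basis : Module.Basis (Fin 3) k carrier
  hvx : (op (Lx k q)) • basis 0 = α • basis 1
  hvy : (op (Ly k q)) • basis 0 = basis 1
  hvz : (op (Lz k q)) • basis 0 = basis 2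
  hv'x : (op (Lx k q)) • basis 1 = 0
  hv'y : (op (Ly k q)) • basis 1 = 0
  hv'z : (op (Lz k q)) • basis 1 = 0
  hv''x : (op (Lx k q)) • basis 2 = 0
  hv''y : (op (Ly k q)) • basis 2 = 0
  hv''z : (op (Lz k q)) • basis 2 = 0

attribute [instance] MAlpha.acg MAlpha.modk MAlpha.modL MAlpha.tower MAlpha.comm

/-!
`Λ(q)` has `k`-basis `1, x, y, z, xy, xz`; its left regular representation witnesses the
independence. Sending `v, v′, v″` to `x - αy, xy, (1 - α)xz` defines a map `M(qα) → Λ(q)` of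
right modules, because `(x - αy)x = qα·xy`, `(x - αy)y = xy`, `(x - αy)z = (1 - α)xz` and `xy`,
`xz` are killed by `x, y, z`. For `α ≠ 1` it is injective, and it lands in the kernel of
`Λ(q) → M(α)`, `1 ↦ v`. That map is onto, so its kernel has dimension `6 - 3 = 3` and is the
image.
-/

open LinearMap Module

theorem LinearMap.map_op_smul_of_adjoin_eq_top {R A M N : Type*} [CommSemiring R] [Semiring A]
    [Algebra R A] [AddCommMonoid M] [Module R M] [Module Aᵐᵒᵖ M] [IsScalarTower R Aᵐᵒᵖ M]
    [AddCommMonoid N] [Module R N] [Module Aᵐᵒᵖ N] [IsScalarTower R Aᵐᵒᵖ N]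
    {s : Set A} (hs : Algebra.adjoin R s = ⊤) (f : M →ₗ[R] N)
    (hf : ∀ a ∈ s, ∀ m, f (op a • m) = op a • f m) (a : A) (m : M) :
    f (op a • m) = op a • f m := by
  have ha : a ∈ Algebra.adjoin R s := hs ▸ Algebra.mem_top
  induction ha using Algebra.adjoin_induction generalizing m with
  | mem a ha => exact hf a ha m
  | algebraMap r => simp [← MulOpposite.algebraMap_apply, algebraMap_smul]
  | add a b _ _ iha ihb => simp [add_smul, iha, ihb]
  | mul a b _ _ iha ihb => simp [mul_smul, iha, ihb]

theorem Module.Basis.map_op_smul_of_adjoin_eq_top {R A M N ι : Type*} [CommSemiring R]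
    [Semiring A] [Algebra R A] [AddCommMonoid M] [Module R M] [Module Aᵐᵒᵖ M]
    [IsScalarTower R Aᵐᵒᵖ M] [AddCommMonoid N] [Module R N] [Module Aᵐᵒᵖ N]
    [IsScalarTower R Aᵐᵒᵖ N] (b : Basis ι R M) {s : Set A} (hs : Algebra.adjoin R s = ⊤)
    (f : M →ₗ[R] N) (hf : ∀ a ∈ s, ∀ i, f (op a • b i) = op a • f (b i)) (a : A) (m : M) :
    f (op a • m) = op a • f m := by
  refine f.map_op_smul_of_adjoin_eq_top hs (fun a ha m => ?_) a m
  induction b.mem_span m using Submodule.span_induction with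
  | mem _ hm => obtain ⟨i, rfl⟩ := hm; exact hf a ha i
  | zero => simp
  | add m n _ _ hm hn => simp [hm, hn]
  | smul r m _ hm => rw [smul_comm, map_smul, hm, map_smul, smul_comm]

theorem Submodule.eq_top_of_one_mem_of_mul_mem {R A : Type*} [CommSemiring R] [Semiring A]
    [Algebra R A] {s : Set A} (hs : Algebra.adjoin R s = ⊤) (V : Submodule R A) (h1 : 1 ∈ V)
    (hV : ∀ v ∈ V, ∀ a ∈ s, v * a ∈ V) : V = ⊤ := by
  suffices ∀ a, ∀ v ∈ V, v * a ∈ V from eq_top_iff'.2 fun a => one_mul a ▸ this a 1 h1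
  intro a
  have ha : a ∈ Algebra.adjoin R s := hs ▸ Algebra.mem_top
  induction ha using Algebra.adjoin_induction with
  | mem a ha => exact fun v hv => hV v hv a ha
  | algebraMap r =>
    exact fun v hv => by simpa [Algebra.commutes, Algebra.smul_def] using V.smul_mem r hv
  | add a b _ _ iha ihb => exact fun v hv => mul_add v a b ▸ V.add_mem (iha v hv) (ihb v hv)
  | mul a b _ _ iha ihb => exact fun v hv => mul_assoc v a b ▸ ihb _ (iha v hv)

theorem LinearMap.range_eq_ker_of_finrank_add_eq {K A N P Q : Type*} [Field K] [Ring A]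
    [Algebra K A] [AddCommGroup N] [Module K N] [Module A N] [IsScalarTower K A N]
    [AddCommGroup P] [Module K P] [Module A P] [IsScalarTower K A P] [FiniteDimensional K P]
    [AddCommGroup Q] [Module K Q] [Module A Q] [IsScalarTower K A Q]
    {f : N →ₗ[A] P} {g : P →ₗ[A] Q} (hf : Function.Injective f) (hg : Function.Surjective g)
    (hfg : range f ≤ ker g) (hdim : finrank K N + finrank K Q = finrank K P) :
    range f = ker g := by
  refine Submodule.restrictScalars_injective K _ _ <|
    Submodule.eq_of_le_of_finrank_eq (Submodule.restrictScalars_mono K hfg) ?_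
  have hrange := (g.restrictScalars K).finrank_range_add_finrank_ker
  rw [range_eq_top.2 (g.coe_restrictScalars K ▸ hg), finrank_top] at hrange
  rw [← range_restrictScalars, ← ker_restrictScalars,
    finrank_range_of_inj (f.coe_restrictScalars K ▸ hf)]
  omega

namespace Lambda

variable {k q}

local notation "x" => Lx k q
local notation "y" => Ly k q
local notation "z" => Lz k q

theorem Lx_mul_Lx : x * x = 0 := by
  simpa [Lx] using RingQuot.mkAlgHom_rel k (LambdaRel.xx (q := q))

theorem Ly_mul_Ly : y * y = 0 := by
  simpa [Ly] using RingQuot.mkAlgHom_rel k (LambdaRel.yy (q := q))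

theorem Lz_mul_Lz : z * z = 0 := by
  simpa [Lz] using RingQuot.mkAlgHom_rel k (LambdaRel.zz (q := q))

theorem Lz_mul_Ly : z * y = 0 := by
  simpa [Ly, Lz] using RingQuot.mkAlgHom_rel k (LambdaRel.zy (q := q))

theorem Ly_mul_Lx : y * x = (-q) • (x * y) := by
  have h := RingQuot.mkAlgHom_rel k (LambdaRel.yx (q := q))
  simp only [map_add, map_smul, map_mul, map_zero] at h
  exact (eq_neg_of_add_eq_zero_left h).trans (neg_smul q _).symm

theorem Lz_mul_Lx : z * x = x * z := by
  simpa [Lx, Lz, sub_eq_zero] using RingQuot.mkAlgHom_rel k (LambdaRel.zx (q := q))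

theorem Ly_mul_Lz : y * z = x * z := by
  simpa [Lx, Ly, Lz, sub_eq_zero] using RingQuot.mkAlgHom_rel k (LambdaRel.yz (q := q))

theorem Lx_mul_Ly_mul_Lx : x * y * x = 0 := by
  rw [mul_assoc, Ly_mul_Lx, mul_smul_comm, ← mul_assoc, Lx_mul_Lx, zero_mul, smul_zero]

theorem Lx_mul_Ly_mul_Ly : x * y * y = 0 := by
  rw [mul_assoc, Ly_mul_Ly, mul_zero]

theorem Lx_mul_Ly_mul_Lz : x * y * z = 0 := by
  rw [mul_assoc, Ly_mul_Lz, ← mul_assoc, Lx_mul_Lx, zero_mul]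

theorem Lx_mul_Lz_mul_Lx : x * z * x = 0 := by
  rw [mul_assoc, Lz_mul_Lx, ← mul_assoc, Lx_mul_Lx, zero_mul]

theorem Lx_mul_Lz_mul_Ly : x * z * y = 0 := by
  rw [mul_assoc, Lz_mul_Ly, mul_zero]

theorem Lx_mul_Lz_mul_Lz : x * z * z = 0 := by
  rw [mul_assoc, Lz_mul_Lz, mul_zero]

theorem Lx_sub_smul_Ly_mul_Lx (α : k) : (x - α • y) * x = (q * α) • (x * y) := by
  rw [sub_mul, Lx_mul_Lx, smul_mul_assoc, Ly_mul_Lx, smul_smul]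
  module

theorem Lx_sub_smul_Ly_mul_Ly (α : k) : (x - α • y) * y = x * y := by
  rw [sub_mul, smul_mul_assoc, Ly_mul_Ly, smul_zero, sub_zero]

theorem Lx_sub_smul_Ly_mul_Lz (α : k) : (x - α • y) * z = (1 - α) • (x * z) := by
  rw [sub_mul, smul_mul_assoc, Ly_mul_Lz]
  module

theorem adjoin_eq_top : Algebra.adjoin k {x, y, z} = ⊤ := by
  have : ({x, y, z} : Set (Lambda k q)) =
      RingQuot.mkAlgHom k (LambdaRel k q) '' Set.range (ι k) := by
    ext; simp [Lx, Ly, Lz, Fin.exists_fin_succ, eq_comm]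
  rw [this, Algebra.adjoin_image, FreeAlgebra.adjoin_range_ι, Algebra.map_top,
    AlgHom.range_eq_top]
  exact RingQuot.mkAlgHom_surjective k _

variable (k q) in
noncomputable def monomial : Fin 6 → Lambda k q := ![1, x, y, z, x * y, x * z]

theorem span_monomial : Submodule.span k (Set.range (monomial k q)) = ⊤ := by
  refine Submodule.eq_top_of_one_mem_of_mul_mem adjoin_eq_top _
    (Submodule.subset_span ⟨0, rfl⟩) fun v hv a ha => ?_
  induction hv using Submodule.span_induction with
  | mem v hv =>
    obtain ⟨i, rfl⟩ := hv
    rcases ha with rfl | rfl | rfl <;> fin_cases i <;>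
      simp only [monomial, Fin.reduceFinMk, Matrix.cons_val, one_mul, Lx_mul_Lx, Ly_mul_Ly,
        Lz_mul_Lz, Lz_mul_Ly, Ly_mul_Lx, Lz_mul_Lx, Ly_mul_Lz, Lx_mul_Ly_mul_Lx, Lx_mul_Ly_mul_Ly,
        Lx_mul_Ly_mul_Lz, Lx_mul_Lz_mul_Lx, Lx_mul_Lz_mul_Ly, Lx_mul_Lz_mul_Lz] <;>
      first
      | exact Submodule.zero_mem _
      | (apply Submodule.subset_span; simp; done)
      | (apply Submodule.smul_mem; apply Submodule.subset_span; simp)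
  | zero => simp
  | add v w _ _ hv hw => rw [add_mul]; exact add_mem hv hw
  | smul c v _ hv => rw [smul_mul_assoc]; exact Submodule.smul_mem _ c hv

section toMatrix

open Matrix

variable (k q) in
/-- Left multiplication by `x`, `y`, `z` in the basis `monomial` = `1, x, y, z, xy, xz`. -/
noncomputable def toMatrix : Lambda k q →ₐ[k] Matrix (Fin 6) (Fin 6) k :=
  RingQuot.liftAlgHom k ⟨FreeAlgebra.lift k
    ![single 1 0 1 + single 4 2 1 + single 5 3 1,
      single 2 0 1 + single 4 1 (-q) + single 5 3 1,
      single 3 0 1 + single 5 1 1], by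
    rintro _ _ (_ | _ | _ | _ | _ | _ | _) <;>
      simp [add_mul, mul_add, single_mul_single_same, single_mul_single_of_ne, smul_single,
        ← single_add]⟩

theorem toMatrix_monomial_apply_zero (i j : Fin 6) :
    toMatrix k q (monomial k q i) j 0 = if j = i then 1 else 0 := by
  fin_cases i <;> fin_cases j <;>
    simp [toMatrix, monomial, Lx, Ly, Lz, add_mul, mul_add, single_mul_single_same,
      single_mul_single_of_ne, one_apply]

end toMatrix

theorem linearIndependent_monomial : LinearIndependent k (monomial k q) := by
  refine Fintype.linearIndependent_iff.2 fun c hc j => ?_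
  simpa [Matrix.sum_apply, toMatrix_monomial_apply_zero] using
    congr($(congrArg (toMatrix k q) hc) j 0)

variable (k q) in
noncomputable def monomialBasis : Basis (Fin 6) k (Lambda k q) :=
  .mk linearIndependent_monomial span_monomial.ge

theorem finrank_eq_six : finrank k (Lambda k q) = 6 := by
  simp [finrank_eq_card_basis (monomialBasis k q)]

variable (q) in
noncomputable def syzygyFamily (α : k) : Fin 3 → Lambda k q :=
  ![x - α • y, x * y, (1 - α) • (x * z)]

theorem linearIndependent_syzygyFamily {α : k} (hα : α ≠ 1) :
    LinearIndependent k (syzygyFamily q α) := by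
  refine Fintype.linearIndependent_iff.2 fun c hc => ?_
  have hd := Fintype.linearIndependent_iff.1 linearIndependent_monomial
    ![0, c 0, -(α * c 0), 0, c 1, (1 - α) * c 2] (by
      rw [← hc]
      simp [Fin.sum_univ_succ, syzygyFamily, monomial]
      module)
  have h2 : (1 - α) * c 2 = 0 := hd 5
  intro i
  fin_cases i
  · exact hd 1
  · exact hd 4
  · exact (mul_eq_zero.1 h2).resolve_left (sub_ne_zero.2 hα.symm)

end Lambda

namespace MAlpha

variable {k q}

theorem finrank_carrier {α : k} (M : MAlpha k q α) : finrank k M.carrier = 3 := by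
  simp [finrank_eq_card_basis M.basis]

theorem toSpanSingleton_surjective {α : k} (M : MAlpha k q α) :
    Function.Surjective (toSpanSingleton (Lambda k q)ᵐᵒᵖ M.carrier (M.basis 0)) := by
  rw [← range_eq_top, ← Submodule.restrictScalars_eq_top_iff k, eq_top_iff, ← M.basis.span_eq,
    Submodule.span_le, Set.range_subset_iff]
  intro i
  fin_cases i
  · exact ⟨1, one_smul _ _⟩
  · exact ⟨op (Ly k q), M.hvy⟩
  · exact ⟨op (Lz k q), M.hvz⟩

variable {α : k} (M : MAlpha k q (q * α))

open Lambda in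
noncomputable def syzygyMap : M.carrier →ₗ[(Lambda k q)ᵐᵒᵖ] (Lambda k q)ᵐᵒᵖ where
  toFun := M.basis.constr k (op ∘ syzygyFamily q α)
  map_add' := map_add _
  map_smul' c := M.basis.map_op_smul_of_adjoin_eq_top adjoin_eq_top _ (by
    rintro _ (rfl | rfl | rfl) i <;> fin_cases i <;>
      simp [M.hvx, M.hvy, M.hvz, M.hv'x, M.hv'y, M.hv'z, M.hv''x, M.hv''y, M.hv''z,
        syzygyFamily, ← op_mul, -MulOpposite.op_sub, Lx_sub_smul_Ly_mul_Lx,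
        Lx_sub_smul_Ly_mul_Ly, Lx_sub_smul_Ly_mul_Lz, Lx_mul_Ly_mul_Lx, Lx_mul_Ly_mul_Ly,
        Lx_mul_Ly_mul_Lz, Lx_mul_Lz_mul_Lx, Lx_mul_Lz_mul_Ly, Lx_mul_Lz_mul_Lz]) c.unop

theorem syzygyMap_basis (i : Fin 3) :
    M.syzygyMap (M.basis i) = op (Lambda.syzygyFamily q α i) :=
  M.basis.constr_basis k _ i

theorem syzygyMap_injective (hα : α ≠ 1) : Function.Injective M.syzygyMap := by
  refine injective_of_linearIndependent (f := M.syzygyMap.restrictScalars k) M.basis.span_eq ?_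
  have hcomp : M.syzygyMap.restrictScalars k ∘ M.basis = op ∘ Lambda.syzygyFamily q α :=
    funext M.syzygyMap_basis
  rw [hcomp]
  exact (Lambda.linearIndependent_syzygyFamily hα).map' (opLinearEquiv k).toLinearMap
    (opLinearEquiv k).ker

theorem range_syzygyMap_le_ker (N : MAlpha k q α) :
    range M.syzygyMap ≤ ker (toSpanSingleton (Lambda k q)ᵐᵒᵖ N.carrier (N.basis 0)) := by
  rw [range_le_ker_iff]
  refine restrictScalars_injective k (M.basis.ext fun i => ?_)
  fin_cases i <;>
    simp [syzygyMap_basis, Lambda.syzygyFamily, mul_smul, sub_smul, smul_comm _ α, N.hvx, N.hvy,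
      N.hv'y, N.hv'z]

end MAlpha

theorem syzygy_malpha {α : k} (hα : α ≠ 1)
    (M : MAlpha k q α) (M' : MAlpha k q (q * α)) :
    Nonempty
      (LinearMap.ker
          (LinearMap.toSpanSingleton (Lambda k q)ᵐᵒᵖ M.carrier (M.basis 0)) ≃ₗ[(Lambda k q)ᵐᵒᵖ]
        M'.carrier) := by
  have : FiniteDimensional k (Lambda k q)ᵐᵒᵖ := .of_basis (Lambda.monomialBasis k q).mulOpposite
  have hinj := M'.syzygyMap_injective hα
  have hrange : range M'.syzygyMap = ker (toSpanSingleton _ M.carrier (M.basis 0)) :=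
    range_eq_ker_of_finrank_add_eq (K := k) hinj M.toSpanSingleton_surjective
      (M'.range_syzygyMap_le_ker M) (by
        rw [M.finrank_carrier, M'.finrank_carrier, MulOpposite.finrank, Lambda.finrank_eq_six])
  exact ⟨(LinearEquiv.ofEq _ _ hrange.symm).trans (LinearEquiv.ofInjective _ hinj).symm⟩
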